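/- Let Λ = (λ_k)_{k≥0} be a strictly increasing sequence of positive real numbers satisfying the Müntz condition Σ_k 1/λ_k < ∞. Then no subsequence of the sequence of functions (x ↦ x^{λ_n})_{n∈ℕ} converges in the weak topology of C([0,1]); consequently the Cesàro operator Γ_Λ on M_Λ^1, which maps the normalized functions f_n(x) = (λ_n + 1)x^{λ_n} to x ↦ x^{λ_n}, is not weakly compact. -/

import Mathlib

open MeasureTheory Set Filter Topology

/-- Lebesgue measure restricted to `[0,1]`. -/
noncomputable def mu01 : Measure ℝ := volume.restrict (Icc (0:ℝ) 1)

/-- The Müntz space `M_Λ^1`: the closure in `L¹([0,1])` of the linear span of the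
monomials `t ↦ t ^ Λ k`. -/
noncomputable def muntzSpace (Λ : ℕ → ℝ) : Submodule ℝ (Lp ℝ 1 mu01) :=
  (Submodule.span ℝ {f : Lp ℝ 1 mu01 |
    ∃ k : ℕ, (f : ℝ → ℝ) =ᵐ[mu01] fun t => t ^ Λ k}).topologicalClosure

/-- A bounded linear operator between normed spaces is weakly compact if the closure,
in the weak topology of the codomain, of the image of the closed unit ball is compact. -/
def IsWeaklyCompactOperator {X Y : Type*} [NormedAddCommGroup X] [NormedSpace ℝ X]
    [NormedAddCommGroup Y] [NormedSpace ℝ Y] (S : X →L[ℝ] Y) : Prop :=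
  IsCompact (closure ((toWeakSpace ℝ Y) '' (⇑S '' Metric.closedBall 0 1)))

/-!
The Müntz condition forces `λ_n → ∞`, so on `[0,1]` the monomials `x ^ λ_n` converge pointwise
to the indicator of `{1}`. Point evaluations are continuous functionals on `C([0,1])`, so any weak
limit, or even any weak cluster point, of a subsequence would be a continuous function equal to
that indicator, which is impossible. Since `Γ_Λ` maps the unit vectors `(λ_n + 1) x ^ λ_n` of
`M_Λ^1` to `x ^ λ_n`, weak compactness of `Γ_Λ` would produce such a weak cluster point.
-/

theorem tendsto_atTop_of_summable_one_div {f : ℕ → ℝ} (hpos : ∀ k, 0 < f k)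
    (hf : Summable fun k => 1 / f k) : Tendsto f atTop atTop := by
  have h : Tendsto (fun k => 1 / f k) atTop (𝓝[>] 0) :=
    tendsto_nhdsWithin_of_tendsto_nhds_of_eventually_within _ hf.tendsto_atTop_zero
      (Eventually.of_forall fun k => one_div_pos.mpr (hpos k))
  simpa [Pi.inv_def, one_div] using h.inv_tendsto_nhdsGT_zero

theorem tendsto_rpow_atTop_of_mem_Icc {c : ℕ → ℝ} (hc : Tendsto c atTop atTop) {x : ℝ}
    (hx : x ∈ Icc (0:ℝ) 1) :
    Tendsto (fun n => x ^ c n) atTop (𝓝 (if x = 1 then 1 else 0)) := by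
  split_ifs with h
  · simp [h]
  · exact (tendsto_rpow_atTop_of_base_lt_one x (by linarith [hx.1]) (hx.2.lt_of_ne h)).comp hc

theorem MapClusterPt.eq_of_tendsto {X ι : Type*} [TopologicalSpace X] [T2Space X] {l : Filter ι}
    {u : ι → X} {a b : X} (ha : MapClusterPt a l u) (hb : Tendsto u l (𝓝 b)) : a = b :=
  eq_of_nhds_neBot (ha.clusterPt.mono hb)

theorem ContinuousMap.eq_of_eqOn_compl_singleton {X Y : Type*} [TopologicalSpace X]
    [PerfectSpace X] [TopologicalSpace Y] [T2Space Y] {f g : C(X, Y)} (a : X)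
    (h : EqOn f g {a}ᶜ) : f = g :=
  coe_injective (Continuous.ext_on (dense_compl_singleton a) f.continuous g.continuous h)

theorem WeakSpace.continuous_apply_symm {E : Type*} [NormedAddCommGroup E] [NormedSpace ℝ E]
    (ℓ : StrongDual ℝ E) : Continuous fun w : WeakSpace ℝ E => ℓ ((toWeakSpace ℝ E).symm w) :=
  WeakBilin.eval_continuous (topDualPairing ℝ E).flip ℓ

theorem not_mapClusterPt_toWeakSpace_rpow {c : ℕ → ℝ} (hc : Tendsto c atTop atTop)
    {q : ℕ → C(Icc (0:ℝ) 1, ℝ)} (hq : ∀ n x, q n x = (x:ℝ) ^ c n)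
    (w : WeakSpace ℝ C(Icc (0:ℝ) 1, ℝ)) :
    ¬ MapClusterPt w atTop fun n => toWeakSpace ℝ C(Icc (0:ℝ) 1, ℝ) (q n) := by
  intro hw
  set g := (toWeakSpace ℝ C(Icc (0:ℝ) 1, ℝ)).symm w
  have hg : ∀ x, g x = if (x:ℝ) = 1 then 1 else 0 := fun x =>
    (MapClusterPt.continuousAt_comp
      (WeakSpace.continuous_apply_symm (ContinuousMap.evalCLM ℝ x)).continuousAt hw).eq_of_tendsto
      (by simpa [Function.comp_def, hq] using tendsto_rpow_atTop_of_mem_Icc hc x.2)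
  have hg0 : g = 0 := ContinuousMap.eq_of_eqOn_compl_singleton 1 fun x hx => by
    simpa [hg] using hx
  simpa [hg] using DFunLike.congr_fun hg0 1

instance isFiniteMeasure_mu01 : IsFiniteMeasure mu01 :=
  inferInstanceAs (IsFiniteMeasure (volume.restrict (Icc (0:ℝ) 1)))

theorem integral_mu01_eq_intervalIntegral (f : ℝ → ℝ) :
    ∫ t, f t ∂mu01 = ∫ t in (0:ℝ)..1, f t := by
  rw [mu01, integral_Icc_eq_integral_Ioc, intervalIntegral.integral_of_le zero_le_one]

theorem setIntegral_Ioc_mu01_eq_intervalIntegral (f : ℝ → ℝ) {x : ℝ} (hx₀ : 0 ≤ x)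
    (hx₁ : x ≤ 1) :
    ∫ t in Ioc 0 x, f t ∂mu01 = ∫ t in (0:ℝ)..x, f t := by
  rw [mu01, Measure.restrict_restrict measurableSet_Ioc,
    inter_eq_left.mpr (Ioc_subset_Icc_self.trans (Icc_subset_Icc_right hx₁)),
    intervalIntegral.integral_of_le hx₀]

theorem memLp_rpow_mu01 (p : ENNReal) {r : ℝ} (hr : 0 ≤ r) :
    MemLp (fun t : ℝ => t ^ r) p mu01 := by
  refine MemLp.of_bound (Real.continuous_rpow_const hr).aestronglyMeasurable 1 ?_
  filter_upwards [ae_restrict_mem measurableSet_Icc] with t ht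
  rw [Real.norm_of_nonneg (Real.rpow_nonneg ht.1 _)]
  exact Real.rpow_le_one ht.1 ht.2 hr

noncomputable def monomialL1 {r : ℝ} (hr : 0 ≤ r) : Lp ℝ 1 mu01 := (memLp_rpow_mu01 1 hr).toLp _

section monomialL1

variable {r : ℝ} (hr : 0 ≤ r)

theorem coeFn_monomialL1 : monomialL1 hr =ᵐ[mu01] fun t => t ^ r :=
  (memLp_rpow_mu01 1 hr).coeFn_toLp

theorem norm_monomialL1 : ‖monomialL1 hr‖ = (r + 1)⁻¹ := by
  have hr₁ : r + 1 ≠ 0 := by positivity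
  have hnorm : (fun t => ‖monomialL1 hr t‖) =ᵐ[mu01] fun t => t ^ r := by
    filter_upwards [coeFn_monomialL1 hr, ae_restrict_mem measurableSet_Icc] with t ht ht'
    rw [ht, Real.norm_of_nonneg (Real.rpow_nonneg ht'.1 _)]
  rw [L1.norm_eq_integral_norm, integral_congr_ae hnorm, integral_mu01_eq_intervalIntegral,
    integral_rpow (Or.inl (by linarith)), Real.one_rpow, Real.zero_rpow hr₁]
  ring

theorem setIntegral_Ioc_monomialL1 {x : ℝ} (hx₀ : 0 ≤ x) (hx₁ : x ≤ 1) :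
    ∫ t in Ioc 0 x, monomialL1 hr t ∂mu01 = x ^ (r + 1) / (r + 1) := by
  rw [integral_congr_ae (ae_restrict_of_ae (coeFn_monomialL1 hr)),
    setIntegral_Ioc_mu01_eq_intervalIntegral _ hx₀ hx₁, integral_rpow (Or.inl (by linarith)),
    Real.zero_rpow (by positivity), sub_zero]

theorem monomialL1_mem_muntzSpace {Λ : ℕ → ℝ} (hΛ : ∀ k, 0 ≤ Λ k) (n : ℕ) :
    monomialL1 (hΛ n) ∈ muntzSpace Λ :=
  Submodule.le_topologicalClosure _ (Submodule.subset_span ⟨n, coeFn_monomialL1 (hΛ n)⟩)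

end monomialL1

noncomputable def normalizedMonomial {Λ : ℕ → ℝ} (hΛ : ∀ k, 0 ≤ Λ k) (n : ℕ) : muntzSpace Λ :=
  ⟨(Λ n + 1) • monomialL1 (hΛ n), Submodule.smul_mem _ _ (monomialL1_mem_muntzSpace hΛ n)⟩

section normalizedMonomial

variable {Λ : ℕ → ℝ} (hΛ : ∀ k, 0 ≤ Λ k) (n : ℕ)

theorem norm_normalizedMonomial : ‖normalizedMonomial hΛ n‖ = 1 := by
  have hΛ₁ : 0 < Λ n + 1 := by linarith [hΛ n]
  rw [normalizedMonomial, Submodule.coe_norm, norm_smul, norm_monomialL1,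
    Real.norm_of_nonneg hΛ₁.le, mul_inv_cancel₀ hΛ₁.ne']

theorem setIntegral_Ioc_normalizedMonomial {x : ℝ} (hx₀ : 0 ≤ x) (hx₁ : x ≤ 1) :
    ∫ t in Ioc 0 x, (normalizedMonomial hΛ n : Lp ℝ 1 mu01) t ∂mu01 = x ^ (Λ n + 1) := by
  have hΛ₁ : 0 < Λ n + 1 := by linarith [hΛ n]
  rw [normalizedMonomial, integral_congr_ae (ae_restrict_of_ae (Lp.coeFn_smul _ _))]
  simp only [Pi.smul_apply, smul_eq_mul]
  rw [integral_const_mul, setIntegral_Ioc_monomialL1 _ hx₀ hx₁, mul_div_cancel₀ _ hΛ₁.ne']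

end normalizedMonomial

theorem cesaro_normalizedMonomial {Λ : ℕ → ℝ} (hΛ : ∀ k, 0 ≤ Λ k)
    {p : ℕ → C(Icc (0:ℝ) 1, ℝ)} (hp : ∀ (n : ℕ) (x : Icc (0:ℝ) 1), p n x = (x:ℝ) ^ Λ n)
    {Γ : ↥(muntzSpace Λ) →L[ℝ] C(Icc (0:ℝ) 1, ℝ)}
    (hΓ : ∀ (f : ↥(muntzSpace Λ)) (x : Icc (0:ℝ) 1), (x:ℝ) ≠ 0 →
      Γ f x = (1/(x:ℝ)) * ∫ t in Ioc (0:ℝ) (x:ℝ), ((f : Lp ℝ 1 mu01) : ℝ → ℝ) t ∂mu01)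
    (n : ℕ) : Γ (normalizedMonomial hΛ n) = p n := by
  refine ContinuousMap.eq_of_eqOn_compl_singleton 0 fun x hx => ?_
  have hx₀ : (x:ℝ) ≠ 0 := Subtype.coe_ne_coe.mpr hx
  rw [hΓ _ x hx₀, setIntegral_Ioc_normalizedMonomial hΛ n x.2.1 x.2.2, hp,
    Real.rpow_add_one hx₀]
  field_simp

theorem monomials_no_weakly_convergent_subsequence_and_cesaro_not_weaklyCompact_general
    (Λ : ℕ → ℝ) (hpos : ∀ k, 0 < Λ k)
    (hmuntz : Summable fun k => 1 / Λ k)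
    (p : ℕ → C(Icc (0:ℝ) 1, ℝ)) (hp : ∀ (n : ℕ) (x : Icc (0:ℝ) 1), p n x = (x:ℝ) ^ Λ n)
    (Γ : ↥(muntzSpace Λ) →L[ℝ] C(Icc (0:ℝ) 1, ℝ))
    (hΓ : ∀ (f : ↥(muntzSpace Λ)) (x : Icc (0:ℝ) 1), (x:ℝ) ≠ 0 →
      Γ f x = (1/(x:ℝ)) * ∫ t in Ioc (0:ℝ) (x:ℝ), ((f : Lp ℝ 1 mu01) : ℝ → ℝ) t ∂mu01) :
    (¬ ∃ (φ : ℕ → ℕ) (g : C(Icc (0:ℝ) 1, ℝ)), StrictMono φ ∧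
      Tendsto (fun n => toWeakSpace ℝ C(Icc (0:ℝ) 1, ℝ) (p (φ n))) atTop
        (𝓝 (toWeakSpace ℝ C(Icc (0:ℝ) 1, ℝ) g))) ∧
    ¬ IsWeaklyCompactOperator Γ := by
  have hΛ : Tendsto Λ atTop atTop := tendsto_atTop_of_summable_one_div hpos hmuntz
  refine ⟨fun ⟨φ, g, hφ, hg⟩ => ?_, fun hΓc => ?_⟩
  · exact not_mapClusterPt_toWeakSpace_rpow (hΛ.comp hφ.tendsto_atTop) (fun n => hp (φ n)) _
      hg.mapClusterPt
  · have hΛ₀ : ∀ k, 0 ≤ Λ k := fun k => (hpos k).le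
    have hp_mem : ∀ n, toWeakSpace ℝ C(Icc (0:ℝ) 1, ℝ) (p n) ∈
        closure (toWeakSpace ℝ C(Icc (0:ℝ) 1, ℝ) '' (Γ '' Metric.closedBall 0 1)) := fun n =>
      subset_closure ⟨Γ (normalizedMonomial hΛ₀ n),
        ⟨_, mem_closedBall_zero_iff.mpr (norm_normalizedMonomial hΛ₀ n).le, rfl⟩,
        by rw [cesaro_normalizedMonomial hΛ₀ hp hΓ]⟩
    obtain ⟨w, -, hw⟩ :=
      hΓc.exists_mapClusterPt (f := atTop) (tendsto_principal.mpr (.of_forall hp_mem))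
    exact not_mapClusterPt_toWeakSpace_rpow hΛ hp w hw

/-- Under the Müntz condition, no subsequence of the monomials
`x ↦ x ^ λ_n` converges in the weak topology of `C([0,1])`; consequently the Cesàro
operator `Γ_Λ : M_Λ^1 → C([0,1])` is not weakly compact. -/
theorem monomials_no_weakly_convergent_subsequence_and_cesaro_not_weaklyCompact
    (Λ : ℕ → ℝ) (hmono : StrictMono Λ) (hpos : ∀ k, 0 < Λ k)
    (hmuntz : Summable fun k => 1 / Λ k)
    (p : ℕ → C(Icc (0:ℝ) 1, ℝ)) (hp : ∀ (n : ℕ) (x : Icc (0:ℝ) 1), p n x = (x:ℝ) ^ Λ n)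
    (Γ : ↥(muntzSpace Λ) →L[ℝ] C(Icc (0:ℝ) 1, ℝ))
    (hΓ : ∀ (f : ↥(muntzSpace Λ)) (x : Icc (0:ℝ) 1), (x:ℝ) ≠ 0 →
      Γ f x = (1/(x:ℝ)) * ∫ t in Ioc (0:ℝ) (x:ℝ), ((f : Lp ℝ 1 mu01) : ℝ → ℝ) t ∂mu01) :
    (¬ ∃ (φ : ℕ → ℕ) (g : C(Icc (0:ℝ) 1, ℝ)), StrictMono φ ∧
      Tendsto (fun n => toWeakSpace ℝ C(Icc (0:ℝ) 1, ℝ) (p (φ n))) atTop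
        (𝓝 (toWeakSpace ℝ C(Icc (0:ℝ) 1, ℝ) g))) ∧
    ¬ IsWeaklyCompactOperator Γ :=
  monomials_no_weakly_convergent_subsequence_and_cesaro_not_weaklyCompact_general Λ hpos hmuntz p hp
    Γ hΓ
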